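/- arXiv:2412.07398 — 7 statements merged into one kernel-verified Lean document; each statement's English description precedes it below -/
import Mathlib

section
/- Let k ≥ 1, b_1,…,b_k > 0, d_1,…,d_k > 0, and let J be the k×k real matrix with entries J_{ij} = b_i - d_i δ_{ij} (where δ is the Kronecker delta). If J has an eigenvalue with strictly positive real part, then Σ_{i=1}^k b_i / d_i > 1. -/
theorem eigenvalue_pos_re_implies_threshold (k : ℕ) (hk : 1 ≤ k)
    (b d : Fin k → ℝ) (hb : ∀ i, 0 < b i) (hd : ∀ i, 0 < d i)
    (J : Matrix (Fin k) (Fin k) ℂ)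
    (hJ : ∀ i j, J i j = (b i : ℂ) - (if i = j then (d i : ℂ) else 0))
    (μ : ℂ) (v : Fin k → ℂ) (hv : v ≠ 0)
    (heig : J.mulVec v = μ • v) (hre : 0 < μ.re) :
    1 < ∑ i, b i / d i := by
  set S : ℂ := ∑ j, v j with hS
  have key : ∀ i, (μ + (d i : ℂ)) * v i = (b i : ℂ) * S := by
    intro i
    have h1 := congrFun heig i
    simp only [Matrix.mulVec, dotProduct, Pi.smul_apply, smul_eq_mul, hJ] at h1
    have h2 : ∑ j, ((b i : ℂ) - if i = j then (d i : ℂ) else 0) * v j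
        = (b i : ℂ) * S - (d i : ℂ) * v i := by
      simp [sub_mul, Finset.sum_sub_distrib, Finset.mul_sum, ite_mul,
        Finset.sum_ite_eq, hS]
    rw [h2] at h1
    linear_combination -h1
  have hne : ∀ i, (μ + (d i : ℂ)) ≠ 0 := by
    intro i h
    have := congrArg Complex.re h
    simp at this
    linarith [hd i]
  have hSne : S ≠ 0 := by
    intro h0
    apply hv
    funext i
    have h := key i
    rw [h0, mul_zero] at h
    simpa using (mul_eq_zero.mp h).resolve_left (hne i)
  have hsum : (1 : ℂ) = ∑ i, (b i : ℂ) / (μ + d i) := by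
    have hSeq : S = ∑ i, (b i : ℂ) / (μ + d i) * S := by
      rw [hS]
      refine Finset.sum_congr rfl fun i _ => ?_
      rw [div_mul_eq_mul_div, eq_div_iff (hne i)]
      linear_combination key i
    rw [← Finset.sum_mul] at hSeq
    exact (mul_right_cancel₀ hSne (by rw [one_mul]; exact hSeq.symm)).symm
  have h1 : (1 : ℝ) = ∑ i, ((b i : ℂ) / (μ + d i)).re := by
    have := congrArg Complex.re hsum
    simpa [Complex.re_sum] using this
  have hterm : ∀ i ∈ Finset.univ, ((b i : ℂ) / (μ + d i)).re < b i / d i := by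
    intro i _
    have hre2 : ((b i : ℂ) / (μ + d i)).re
        = b i * (μ.re + d i) / ((μ.re + d i) ^ 2 + μ.im ^ 2) := by
      rw [Complex.div_re]
      simp [Complex.normSq_apply]
      ring
    rw [hre2]
    have hpos : 0 < (μ.re + d i) ^ 2 + μ.im ^ 2 := by
      nlinarith [hd i, sq_nonneg μ.im]
    rw [div_lt_div_iff₀ hpos (hd i)]
    nlinarith [mul_pos (hb i) (mul_pos (add_pos hre (hd i)) hre),
      mul_nonneg (hb i).le (sq_nonneg μ.im)]
  have hne' : (Finset.univ : Finset (Fin k)).Nonempty := by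
    exact ⟨⟨0, hk⟩, Finset.mem_univ _⟩
  calc (1 : ℝ) = ∑ i, ((b i : ℂ) / (μ + d i)).re := h1
    _ < ∑ i, b i / d i := Finset.sum_lt_sum_of_nonempty hne' fun i _ => hterm i (Finset.mem_univ i)
end

section
/- Let k ≥ 1, b_1,…,b_k > 0, d_1,…,d_k > 0 with Σ_{i=1}^k b_i / d_i ≤ 1, and let J be the k×k matrix with entries J_{ij} = b_i - d_i δ_{ij}. Then every eigenvalue λ of J satisfies Re(λ) ≤ 0. -/
theorem eigenvalue_re_nonpos_of_threshold (k : ℕ) (hk : 1 ≤ k)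
    (b d : Fin k → ℝ) (hb : ∀ i, 0 < b i) (hd : ∀ i, 0 < d i)
    (hsum : ∑ i, b i / d i ≤ 1)
    (J : Matrix (Fin k) (Fin k) ℂ)
    (hJ : ∀ i j, J i j = (b i : ℂ) - (if i = j then (d i : ℂ) else 0))
    (μ : ℂ) (v : Fin k → ℂ) (hv : v ≠ 0)
    (heig : J.mulVec v = μ • v) :
    μ.re ≤ 0 := by
  by_contra hneg
  push_neg at hneg
  set S : ℂ := ∑ j, v j with hS
  have key : ∀ i, (μ + (d i : ℂ)) * v i = (b i : ℂ) * S := by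
    intro i
    have h1 := congrFun heig i
    simp only [Matrix.mulVec, dotProduct, Pi.smul_apply, smul_eq_mul] at h1
    have h2 : ∑ j, J i j * v j = (b i : ℂ) * S - (d i : ℂ) * v i := by
      simp only [hJ, sub_mul, ite_mul, zero_mul, Finset.sum_sub_distrib,
        ← Finset.mul_sum, Finset.sum_ite_eq, Finset.mem_univ, if_true, hS]
    rw [h2] at h1
    linear_combination -h1
  have hμd : ∀ i, (μ + (d i : ℂ)) ≠ 0 := by
    intro i h
    have h2 : (μ + (d i : ℂ)).re = 0 := by rw [h]; simp
    simp [Complex.add_re] at h2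
    linarith [hd i]
  by_cases hS0 : S = 0
  · obtain ⟨i, hvi⟩ := Function.ne_iff.mp hv
    have h3 := key i
    rw [hS0, mul_zero] at h3
    rcases mul_eq_zero.mp h3 with h | h
    · exact hμd i h
    · exact hvi h
  · have hv_eq : ∀ i, v i = (b i : ℂ) / (μ + d i) * S := by
      intro i
      rw [div_mul_eq_mul_div, eq_div_iff (hμd i)]
      linear_combination key i
    have hsum1 : ∑ i, (b i : ℂ) / (μ + d i) = 1 := by
      have h4 : S = (∑ i, (b i : ℂ) / (μ + d i)) * S := by
        rw [Finset.sum_mul]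
        conv_lhs => rw [hS]
        exact Finset.sum_congr rfl fun i _ => hv_eq i
      have h5 : (∑ i, (b i : ℂ) / (μ + d i)) * S = 1 * S := by
        rw [one_mul]; exact h4.symm
      exact mul_right_cancel₀ hS0 h5
    have hre : (1 : ℝ) = ∑ i, b i * (μ.re + d i) / ((μ.re + d i) ^ 2 + μ.im ^ 2) := by
      have h5 : ((∑ i, (b i : ℂ) / (μ + d i)).re) = 1 := by rw [hsum1]; simp
      rw [Complex.re_sum] at h5
      rw [← h5]
      refine Finset.sum_congr rfl fun i _ => ?_
      rw [Complex.div_re]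
      simp [Complex.normSq_apply, Complex.add_re, Complex.add_im]
      ring
    have hlt : ∑ i, b i * (μ.re + d i) / ((μ.re + d i) ^ 2 + μ.im ^ 2) < ∑ i, b i / d i := by
      apply Finset.sum_lt_sum_of_nonempty
      · exact Finset.univ_nonempty_iff.mpr ⟨⟨0, hk⟩⟩
      · intro i _
        have hrd : 0 < μ.re + d i := by linarith [hd i]
        have hden : 0 < (μ.re + d i) ^ 2 + μ.im ^ 2 := by positivity
        rw [div_lt_div_iff₀ hden (hd i)]
        nlinarith [sq_nonneg μ.im, mul_pos (hb i) (mul_pos hrd hneg),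
          mul_nonneg (hb i).le (sq_nonneg μ.im)]
    linarith
end

section
/- Let G be a symmetric positive definite real k×k matrix, Σ a symmetric real k×k matrix, and J a real k×k matrix all of whose eigenvalues have strictly negative real part. If G Σ = -2 J, then Σ is invertible and Σ⁻¹ is symmetric positive definite. -/
/-!
With `S = √G`, the matrix `G * Σ = S * (S * Σ * S) * S⁻¹` is similar to the symmetric matrix
`S * Σ * S`, so every eigenvalue of `S * Σ * S` is a real eigenvalue of `G * Σ = -2 • J`, hence
positive. Thus `S * Σ * S` is positive definite, and so are its congruent `Σ` and `Σ⁻¹`.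
-/

open Matrix
open scoped ComplexOrder

namespace Matrix

variable {n : Type*} [Fintype n]

section RCLike

variable {𝕜 : Type*} [DecidableEq n] [RCLike 𝕜]

open scoped MatrixOrder in
theorem PosDef.exists_posDef_mul_self_eq {G : Matrix n n 𝕜} (hG : G.PosDef) :
    ∃ S : Matrix n n 𝕜, S.PosDef ∧ S * S = G :=
  ⟨CFC.sqrt G, hG.isStrictlyPositive.sqrt.posDef, CFC.sqrt_mul_sqrt_self G hG.posSemidef.nonneg⟩

theorem IsHermitian.posDef_of_posDef_mul_eigenvalues_pos {G A : Matrix n n 𝕜}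
    (hA : A.IsHermitian) (hG : G.PosDef)
    (hpos : ∀ (μ : ℝ) (v : n → 𝕜), v ≠ 0 → (G * A) *ᵥ v = (μ : 𝕜) • v → 0 < μ) :
    A.PosDef := by
  obtain ⟨S, hS, rfl⟩ := hG.exists_posDef_mul_self_eq
  rw [← hS.isUnit.posDef_star_left_conjugate_iff, hS.isHermitian.star_eq]
  have hM : (S * A * S).IsHermitian := by
    simpa only [hS.isHermitian.eq] using isHermitian_conjTranspose_mul_mul S hA
  refine hM.posDef_iff_eigenvalues_pos.mpr fun i => ?_
  set v : n → 𝕜 := ⇑(hM.eigenvectorBasis i)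
  have hv : v ≠ 0 := by simpa [v] using hM.eigenvectorBasis.orthonormal.ne_zero i
  have hSv : S *ᵥ v ≠ 0 := fun h =>
    hv (mulVec_injective_of_isUnit hS.isUnit (by rw [h, mulVec_zero]))
  refine hpos _ (S *ᵥ v) hSv ?_
  calc (S * S * A) *ᵥ (S *ᵥ v) = S *ᵥ ((S * A * S) *ᵥ v) := by
        simp only [mulVec_mulVec, mul_assoc]
    _ = _ := by
        rw [hM.mulVec_eigenvectorBasis, mulVec_smul, RCLike.real_smul_eq_coe_smul (K := 𝕜)]

end RCLike

theorem neg_of_mulVec_eq_smul_of_forall_re_neg {J : Matrix n n ℝ}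
    (hJ : ∀ (μ : ℂ) (v : n → ℂ), v ≠ 0 →
      (J.map (Complex.ofReal : ℝ → ℂ)).mulVec v = μ • v → μ.re < 0)
    {μ : ℝ} {w : n → ℝ} (hw : w ≠ 0) (hJw : J *ᵥ w = μ • w) : μ < 0 := by
  have hcw : (Complex.ofReal ∘ w) ≠ 0 := fun h =>
    hw (funext fun i => by simpa using congrFun h i)
  refine Complex.ofReal_re μ ▸ hJ μ _ hcw (funext fun i => ?_)
  exact (RingHom.map_mulVec Complex.ofRealHom J w i).symm.trans (by simp [hJw])

end Matrix

theorem sigma_inverse_posdef (k : ℕ)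
    (G Sig J : Matrix (Fin k) (Fin k) ℝ)
    (hG : G.PosDef) (hSig : Sig.IsSymm)
    (hJ : ∀ (μ : ℂ) (v : Fin k → ℂ), v ≠ 0 →
      (J.map (Complex.ofReal : ℝ → ℂ)).mulVec v = μ • v → μ.re < 0)
    (heq : G * Sig = (-2 : ℝ) • J) :
    IsUnit Sig.det ∧ (Sig⁻¹).PosDef := by
  have hSigPos : Sig.PosDef := by
    refine (isHermitian_iff_isSymm.mpr hSig).posDef_of_posDef_mul_eigenvalues_pos hG
      fun μ v hv hμ => ?_
    have hJv : J *ᵥ v = (-(μ / 2)) • v := by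
      rw [heq, smul_mulVec, RCLike.ofReal_real_eq_id, id] at hμ
      calc J *ᵥ v = (-1 / 2 : ℝ) • ((-2 : ℝ) • J *ᵥ v) := by rw [smul_smul]; norm_num
        _ = (-(μ / 2)) • v := by rw [hμ, smul_smul]; ring_nf
    linarith [neg_of_mulVec_eq_smul_of_forall_re_neg hJ hv hJv]
  exact ⟨(isUnit_iff_isUnit_det Sig).mp hSigPos.isUnit, hSigPos.inv⟩
end

section
/- Let k ≥ 1 and let β, μ_1,…,μ_k, α_1,…,α_k, f_1,…,f_k > 0. Define on the open set {y : 0 < y_i < f_i for all i} the functions h_i(y) = ln( (y_i/α_i) / ( β μ_i (f_i - y_i) Σ_j y_j ) ). Then ∂h_i/∂y_j = ∂h_j/∂y_i for all i, j on this set. -/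
/-!
For `i ≠ j` the only dependence of `h i` on `y j` is through the factor `∑ l, y l`, so
`∂h_i/∂y_j = -(∑ l, y l)⁻¹`, which is symmetric in `i` and `j`.
-/

open Real Finset Function

theorem sum_update_eq_add_sub {ι : Type*} [Fintype ι] [DecidableEq ι] (y : ι → ℝ) (j : ι) (t : ℝ) :
    ∑ l, update y j t l = t + (∑ l, y l - y j) := by
  rw [sum_update_of_mem (mem_univ j), ← sum_erase_eq_sub (mem_univ j), sdiff_singleton_eq_erase]

theorem hasDerivAt_log_div_mul_add_const {a b : ℝ} (ha : a ≠ 0) (hb : b ≠ 0) (c : ℝ) {x : ℝ}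
    (hx : x + c ≠ 0) :
    HasDerivAt (fun t => log (a / (b * (t + c)))) (-(x + c)⁻¹) x := by
  have hlin : HasDerivAt (fun t => b * (t + c)) b x := by
    simpa using ((hasDerivAt_id x).add_const c).const_mul b
  convert ((hlin.inv (mul_ne_zero hb hx)).const_mul a).log
    (div_ne_zero ha (mul_ne_zero hb hx)) using 1
  · ext t; simp [div_eq_mul_inv]
  · simp only [Pi.inv_apply]; field_simp

theorem deriv_log_div_mul_sum_update {ι : Type*} [Fintype ι] [DecidableEq ι] (y : ι → ℝ) (j : ι)
    {a b : ℝ} (ha : a ≠ 0) (hb : b ≠ 0) (hS : ∑ l, y l ≠ 0) :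
    deriv (fun t => log (a / (b * ∑ l, update y j t l))) (y j) = -(∑ l, y l)⁻¹ := by
  simp_rw [sum_update_eq_add_sub]
  refine (hasDerivAt_log_div_mul_add_const ha hb _ ?_).deriv.trans ?_ <;> simp [hS]

theorem irrotational_SIS_general (k : ℕ)
    (β : ℝ) (mu alpha f : Fin k → ℝ)
    (hβ : 0 < β) (hmu : ∀ i, 0 < mu i) (halpha : ∀ i, 0 < alpha i)
    (h : Fin k → (Fin k → ℝ) → ℝ)
    (hdef : ∀ i y, h i y =
      Real.log ((y i / alpha i) / (β * mu i * (f i - y i) * ∑ j, y j))) :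
    ∀ (y : Fin k → ℝ), (∀ i, 0 < y i ∧ y i < f i) → ∀ i j,
      deriv (fun t => h i (Function.update y j t)) (y j) =
        deriv (fun t => h j (Function.update y i t)) (y i) := by
  intro y hy i j
  have hS : ∑ l, y l ≠ 0 := (sum_pos (fun l _ => (hy l).1) ⟨i, mem_univ i⟩).ne'
  have off_diag : ∀ i j, i ≠ j →
      deriv (fun t => h i (update y j t)) (y j) = -(∑ l, y l)⁻¹ := by
    intro i j hij
    simp_rw [hdef, update_of_ne hij]
    exact deriv_log_div_mul_sum_update y j (div_pos (hy i).1 (halpha i)).ne'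
      (mul_pos (mul_pos hβ (hmu i)) (sub_pos.2 (hy i).2)).ne' hS
  rcases eq_or_ne i j with rfl | hij
  · rfl
  · rw [off_diag i j hij, off_diag j i hij.symm]

theorem irrotational_SIS (k : ℕ) (hk : 1 ≤ k)
    (β : ℝ) (mu alpha f : Fin k → ℝ)
    (hβ : 0 < β) (hmu : ∀ i, 0 < mu i) (halpha : ∀ i, 0 < alpha i)
    (hf : ∀ i, 0 < f i)
    (h : Fin k → (Fin k → ℝ) → ℝ)
    (hdef : ∀ i y, h i y =
      Real.log ((y i / alpha i) / (β * mu i * (f i - y i) * ∑ j, y j))) :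
    ∀ (y : Fin k → ℝ), (∀ i, 0 < y i ∧ y i < f i) → ∀ i j,
      deriv (fun t => h i (Function.update y j t)) (y j) =
        deriv (fun t => h j (Function.update y i t)) (y i) :=
  irrotational_SIS_general k β mu alpha f hβ hmu halpha h hdef
end

section
/- Let k ≥ 1 and λ, μ, κ > 0 with kλ > μ. Define V(y) = Σ_{i=1}^k ∫ over a path from y* to y of h(y')·dy', where h_i(y) = ln( y_i(μ + κ Σ_j y_j) / (λ Σ_j y_j) ) and y* = ((kλ−μ)/(kκ),…,(kλ−μ)/(kκ)). Then the limit of V along any path approaching the origin within the positive orthant equals (kλ − μ)/κ + (μ/κ) ln( μ/(kλ) ), and this value is strictly positive. -/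
/-!
The field `h` is the gradient of the explicit potential
`Φ y = ∑ yᵢ log yᵢ - S log S + (μ + κ S) log (μ + κ S) / κ - S (1 + log λ)`, `S = ∑ yⱼ`,
and `Φ` is continuous on all of `ℝᵏ` because `x log x` is. On the connected open orthant `V` and
`Φ - Φ y*` have the same derivative and agree at `y*`, so the limit of `V` at the origin is
`Φ 0 - Φ y*`. This equals `(kλ / κ) · klFun (μ / kλ)`, positive since `klFun` vanishes only at `1`.
-/

open Filter Real InformationTheory

variable {ι : Type*}

theorem isOpen_setOf_forall_pos [Finite ι] : IsOpen {y : ι → ℝ | ∀ i, 0 < y i} := by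
  simpa only [Set.ofPred_forall] using
    isOpen_iInter_of_finite fun i => isOpen_lt continuous_const (continuous_apply i)

theorem convex_setOf_forall_pos : Convex ℝ {y : ι → ℝ | ∀ i, 0 < y i} := by
  have h : {y : ι → ℝ | ∀ i, 0 < y i} = Set.univ.pi fun _ => Set.Ioi 0 := by ext; simp
  exact h ▸ convex_pi fun _ _ => convex_Ioi 0

theorem sub_add_mul_log_div_pos {a b : ℝ} (ha : 0 ≤ a) (hb : 0 < b) (hab : a ≠ b) :
    0 < b - a + a * log (a / b) := by
  have hkl : 0 < klFun (a / b) :=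
    (klFun_nonneg (by positivity)).lt_of_ne'
      fun h => hab ((div_eq_one_iff_eq hb.ne').1 ((klFun_eq_zero_iff (by positivity)).1 h))
  have hb_kl : b - a + a * log (a / b) = b * klFun (a / b) := by
    rw [klFun_apply]; field_simp; ring
  rw [hb_kl]; positivity

variable [Fintype ι]

noncomputable def actionPotential (lam mu kap : ℝ) (y : ι → ℝ) : ℝ :=
  ∑ i, y i * log (y i) - (∑ i, y i) * log (∑ i, y i)
    + (mu + kap * ∑ i, y i) * log (mu + kap * ∑ i, y i) / kap - (∑ i, y i) * (1 + log lam)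

theorem hasFDerivAt_sum_apply (y : ι → ℝ) :
    HasFDerivAt (fun y : ι → ℝ => ∑ i, y i)
      (∑ i, (ContinuousLinearMap.proj i : (ι → ℝ) →L[ℝ] ℝ)) y :=
  HasFDerivAt.fun_sum fun i _ => hasFDerivAt_apply i y

theorem continuous_actionPotential (lam mu kap : ℝ) :
    Continuous (actionPotential (ι := ι) lam mu kap) := by
  unfold actionPotential
  fun_prop

theorem hasFDerivAt_actionPotential [Nonempty ι] {lam mu kap : ℝ} (hlam : 0 < lam)
    (hmu : 0 ≤ mu) (hkap : 0 < kap) {y : ι → ℝ} (hy : ∀ i, 0 < y i) :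
    HasFDerivAt (actionPotential lam mu kap)
      (∑ i, log (y i * (mu + kap * ∑ j, y j) / (lam * ∑ j, y j)) •
        (ContinuousLinearMap.proj i : (ι → ℝ) →L[ℝ] ℝ)) y := by
  set S := ∑ j, y j
  have hS : 0 < S := Finset.sum_pos (fun j _ => hy j) Finset.univ_nonempty
  have hT : 0 < mu + kap * S := by positivity
  have hsum := hasFDerivAt_sum_apply y
  have hentropy : HasFDerivAt (fun y : ι → ℝ => ∑ i, y i * log (y i))
      (∑ i, (log (y i) + 1) • (ContinuousLinearMap.proj i : (ι → ℝ) →L[ℝ] ℝ)) y :=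
    HasFDerivAt.fun_sum fun i _ =>
      (hasDerivAt_mul_log (hy i).ne').comp_hasFDerivAt (f := fun y : ι → ℝ => y i) y
        (hasFDerivAt_apply i y)
  have htotal := (hasDerivAt_mul_log hS.ne').comp_hasFDerivAt y hsum
  have hdeath : HasDerivAt (fun t => (mu + kap * t) * log (mu + kap * t) / kap)
      ((log (mu + kap * S) + 1) * kap / kap) S := by
    have hlin : HasDerivAt (fun t => mu + kap * t) kap S := by
      simpa using ((hasDerivAt_id S).const_mul kap).const_add mu
    exact ((hasDerivAt_mul_log hT.ne').comp S hlin).div_const kap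
  have hbirth := hsum.mul_const (1 + log lam)
  refine ((hentropy.sub htotal).add (hdeath.comp_hasFDerivAt y hsum)).sub hbirth
    |>.congr_fderiv ?_
  have hlog : ∀ i, log (y i * (mu + kap * S) / (lam * S))
      = log (y i) - log S + log (mu + kap * S) - log lam := fun i => by
    rw [log_div (mul_pos (hy i) hT).ne' (mul_pos hlam hS).ne', log_mul (hy i).ne' hT.ne',
      log_mul hlam.ne' hS.ne']
    ring
  refine ContinuousLinearMap.ext fun v => ?_
  simp only [hlog, sub_apply, add_apply, smul_apply, sum_apply,
    ContinuousLinearMap.proj_apply, smul_eq_mul, mul_div_cancel_right₀ _ hkap.ne']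
  simp only [add_mul, sub_mul, Finset.sum_add_distrib, Finset.sum_sub_distrib, ← Finset.mul_sum]
  ring

theorem actionPotential_zero (lam mu kap : ℝ) :
    actionPotential (ι := ι) lam mu kap 0 = mu * log mu / kap := by
  simp [actionPotential]

theorem actionPotential_equilibrium [Nonempty ι] {lam mu kap : ℝ} (hlam : 0 < lam)
    (hkap : 0 < kap) (hthresh : mu < Fintype.card ι * lam) :
    actionPotential lam mu kap (fun _ : ι => (Fintype.card ι * lam - mu) / (Fintype.card ι * kap))
      = mu * log (Fintype.card ι * lam) / kap - (Fintype.card ι * lam - mu) / kap := by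
  simp only [actionPotential, Finset.sum_const, Finset.card_univ, nsmul_eq_mul]
  set n : ℝ := (Fintype.card ι : ℝ)
  set c := (n * lam - mu) / (n * kap) with hc_def
  have hn : 0 < n := by positivity
  have hc : 0 < c := div_pos (by linarith) (by positivity)
  have hnc : n * c = (n * lam - mu) / kap := by
    rw [hc_def]; field_simp
  have hT : mu + kap * ((n * lam - mu) / kap) = n * lam := by
    field_simp; ring
  rw [log_mul hn.ne' hc.ne', ← mul_assoc, hnc, hT, log_mul hn.ne' hlam.ne']
  ring

theorem actionPotential_zero_sub_equilibrium [Nonempty ι] {lam mu kap : ℝ} (hlam : 0 < lam)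
    (hmu : 0 < mu) (hkap : 0 < kap) (hthresh : mu < Fintype.card ι * lam) :
    actionPotential (ι := ι) lam mu kap 0
        - actionPotential lam mu kap
          (fun _ : ι => (Fintype.card ι * lam - mu) / (Fintype.card ι * kap))
      = (Fintype.card ι * lam - mu) / kap + mu / kap * log (mu / (Fintype.card ι * lam)) := by
  rw [actionPotential_zero, actionPotential_equilibrium hlam hkap hthresh,
    log_div hmu.ne' (by positivity)]
  ring

theorem action_limit_at_origin_example2 (k : ℕ) (hk : 1 ≤ k)
    (lam mu kap : ℝ) (hlam : 0 < lam) (hmu : 0 < mu) (hkap : 0 < kap)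
    (hthresh : mu < k * lam)
    (h : Fin k → (Fin k → ℝ) → ℝ)
    (hdef : ∀ i y, h i y = Real.log (y i * (mu + kap * ∑ j, y j) / (lam * ∑ j, y j)))
    (ystar : Fin k → ℝ) (hystar : ∀ i, ystar i = (k * lam - mu) / (k * kap))
    (U : Set (Fin k → ℝ)) (hU : U = {y | ∀ i, 0 < y i})
    (A : ℝ) (hA : A = (k * lam - mu) / kap + (mu / kap) * Real.log (mu / (k * lam)))
    (V : (Fin k → ℝ) → ℝ)
    (hgrad : ∀ y ∈ U, DifferentiableAt ℝ V y ∧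
      ∀ v : Fin k → ℝ, fderiv ℝ V y v = ∑ i, h i y * v i)
    (hV0 : V ystar = 0) :
    Tendsto V (nhdsWithin 0 U) (nhds A) ∧ 0 < A := by
  have : Nonempty (Fin k) := ⟨⟨0, hk⟩⟩
  subst hU hA
  set Φ := actionPotential (ι := Fin k) lam mu kap
  have hystar_eq : ystar = fun _ => (k * lam - mu) / (k * kap) := funext hystar
  have hystar_pos : ∀ i, 0 < ystar i := fun i => by
    rw [hystar i]; exact div_pos (by linarith) (by positivity)
  have hΦ : ∀ y ∈ {y : Fin k → ℝ | ∀ i, 0 < y i}, HasFDerivAt (fun y => Φ y - Φ ystar)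
      (∑ i, h i y • (ContinuousLinearMap.proj i : (Fin k → ℝ) →L[ℝ] ℝ)) y := fun y hy => by
    simpa only [hdef] using (hasFDerivAt_actionPotential hlam hmu.le hkap hy).sub_const (Φ ystar)
  have hV : Set.EqOn V (fun y => Φ y - Φ ystar) {y | ∀ i, 0 < y i} :=
    isOpen_setOf_forall_pos.eqOn_of_fderiv_eq convex_setOf_forall_pos.isPreconnected
      (fun y hy => (hgrad y hy).1.differentiableWithinAt)
      (fun y hy => (hΦ y hy).differentiableAt.differentiableWithinAt)
      (fun y hy => ContinuousLinearMap.ext fun v => by simp [(hgrad y hy).2, (hΦ y hy).fderiv])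
      hystar_pos (by simp [hV0])
  have hlimit : Φ 0 - Φ ystar = (k * lam - mu) / kap + mu / kap * log (mu / (k * lam)) := by
    simpa [hystar_eq] using
      actionPotential_zero_sub_equilibrium (ι := Fin k) hlam hmu hkap (by simpa)
  refine ⟨?_, ?_⟩
  · rw [← hlimit]
    exact (((continuous_actionPotential lam mu kap).tendsto 0).sub_const _).mono_left
      nhdsWithin_le_nhds |>.congr' (eventually_nhdsWithin_of_forall fun y hy => (hV hy).symm)
  · have hpos := sub_add_mul_log_div_pos hmu.le (by positivity) hthresh.ne
    have hsplit : (k * lam - mu) / kap + mu / kap * log (mu / (k * lam))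
        = (k * lam - mu + mu * log (mu / (k * lam))) / kap := by ring
    rw [hsplit]
    exact div_pos hpos hkap
end

section
/- Let S be a finite set and q : S × S → ℝ_{≥0} transition rates of an irreducible continuous-time Markov chain (q(x,x') > 0 allowed only for x ≠ x'). Suppose Kolmogorov's criterion holds: for every finite sequence x_1, x_2, …, x_n ∈ S, q(x_1,x_2) q(x_2,x_3) ⋯ q(x_{n-1},x_n) q(x_n,x_1) = q(x_n,x_{n-1}) ⋯ q(x_2,x_1) q(x_1,x_n). Then the (unique) stationary distribution π satisfies detailed balance: π(x) q(x,x') = π(x') q(x',x) for all x, x' ∈ S. -/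
/-!
Write `F(p)` and `B(p)` for the products of the rates along a walk `p` taken forwards and
backwards. Kolmogorov's criterion says `F = B` on closed walks; closing a walk with the reverse
of another one shows that `B(p) / F(p)` depends only on the endpoints of `p`. For walks `p` from
`x` to a fixed root it therefore defines a positive measure `μ x` with `μ x q x y = μ y q y x`.
Reversibility turns stationarity of `π` into `∑ z, (π b / μ b - π z / μ z) μ z q z b = 0`, so by
the maximum principle `π / μ` is constant along edges into a maximum point, hence constant by
irreducibility, and `π` inherits detailed balance from `μ`.
-/

open Finset Function Relation

section Walks

variable {S : Type*}

def walkWeight (q : S → S → ℝ) (p : ℕ → S) (n : ℕ) : ℝ :=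
  ∏ i ∈ range n, q (p i) (p (i + 1))

def walkCons (a : S) (p : ℕ → S) : ℕ → S
  | 0 => a
  | i + 1 => p i

def walkAppend (p r : ℕ → S) (n : ℕ) : ℕ → S :=
  fun i => if i ≤ n then p i else r (i - n)

variable (q : S → S → ℝ) {p r : ℕ → S} {n m : ℕ}

theorem walkWeight_congr {p' : ℕ → S} (h : ∀ i ≤ n, p i = p' i) :
    walkWeight q p n = walkWeight q p' n :=
  prod_congr rfl fun i hi => by
    have hi := mem_range.mp hi
    rw [h i hi.le, h (i + 1) hi]

theorem walkWeight_pos (hp : ∀ i < n, 0 < q (p i) (p (i + 1))) : 0 < walkWeight q p n :=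
  prod_pos fun i hi => hp i (mem_range.mp hi)

theorem walkWeight_walkCons (a : S) :
    walkWeight q (walkCons a p) (n + 1) = q a (p 0) * walkWeight q p n :=
  prod_range_succ' _ n |>.trans (mul_comm _ _)

theorem walkWeight_reverse : walkWeight q (fun i => p (n - i)) n = walkWeight (swap q) p n := by
  rw [walkWeight, ← prod_range_reflect]
  refine prod_congr rfl fun i hi => ?_
  have hi := mem_range.mp hi
  rw [show n - (n - 1 - i) = i + 1 by omega, show n - (n - 1 - i + 1) = i by omega]

theorem walkWeight_walkAppend (h : p n = r 0) :
    walkWeight q (walkAppend p r n) (n + m) = walkWeight q p n * walkWeight q r m := by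
  rw [walkWeight, prod_range_add]
  congr 1
  · exact walkWeight_congr q fun i hi => if_pos hi
  · refine walkWeight_congr q (p := fun i => walkAppend p r n (n + i)) fun i _ => ?_
    rcases Nat.eq_zero_or_pos i with rfl | hi
    · simp [walkAppend, h]
    · simp [walkAppend, show ¬ n + i ≤ n by omega]

theorem exists_walk_of_reflTransGen {R : S → S → Prop} {a b : S} (h : ReflTransGen R a b) :
    ∃ (n : ℕ) (p : ℕ → S), p 0 = a ∧ p n = b ∧ ∀ i < n, R (p i) (p (i + 1)) := by
  induction h using ReflTransGen.head_induction_on with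
  | refl => exact ⟨0, fun _ => b, rfl, rfl, by simp⟩
  | head hac _ ih =>
    obtain ⟨n, p, hp0, hpn, hp⟩ := ih
    refine ⟨n + 1, walkCons _ p, rfl, hpn, fun i hi => ?_⟩
    cases i with
    | zero => simpa [walkCons, hp0] using hac
    | succ i => exact hp i (by omega)

theorem reflTransGen_of_fin_walk {R : S → S → Prop} (p : Fin (n + 1) → S)
    (hp : ∀ i : Fin n, R (p i.castSucc) (p i.succ)) : ReflTransGen R (p 0) (p (Fin.last n)) := by
  refine (reflTransGen_of_succ_of_le (fun i j => R (p i) (p j)) (fun i hi => ?_)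
    (Fin.zero_le _)).lift p fun _ _ h => h
  obtain ⟨j, rfl⟩ := Fin.eq_castSucc_of_ne_last hi.2.ne
  simpa using hp j

end Walks

def KolmogorovCriterion {S : Type*} (q : S → S → ℝ) : Prop :=
  ∀ (n : ℕ) (x : Fin (n + 1) → S), (∏ i, q (x i) (x (i + 1))) = ∏ i, q (x (i + 1)) (x i)

namespace KolmogorovCriterion

variable {S : Type*} {q : S → S → ℝ} {p r : ℕ → S} {n m : ℕ}

theorem walkWeight_eq_of_closed (hK : KolmogorovCriterion q) (hp : p n = p 0) :
    walkWeight q p n = walkWeight (swap q) p n := by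
  cases n with
  | zero => rfl
  | succ n =>
    have h := hK n (fun i => p i)
    rw [Fin.prod_univ_castSucc, Fin.prod_univ_castSucc] at h
    rw [walkWeight, walkWeight, prod_range_succ, prod_range_succ, hp,
      ← Fin.prod_univ_eq_prod_range (fun k => q (p k) (p (k + 1))),
      ← Fin.prod_univ_eq_prod_range (fun k => swap q (p k) (p (k + 1)))]
    simpa [Fin.coeSucc_eq_succ, Fin.last_add_one] using h

theorem walkWeight_mul_comm (hK : KolmogorovCriterion q) (h0 : p 0 = r 0) (h1 : p n = r m) :
    walkWeight q p n * walkWeight (swap q) r m = walkWeight q r m * walkWeight (swap q) p n := by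
  set c := walkAppend p (fun i => r (m - i)) n
  have hjoin : p n = r (m - 0) := h1
  have hclosed : c (n + m) = c 0 := by
    rcases Nat.eq_zero_or_pos m with rfl | hm
    · simp [c, walkAppend, h1, h0]
    · simp [c, walkAppend, show ¬ n + m ≤ n by omega, h0]
  have h := hK.walkWeight_eq_of_closed hclosed
  rwa [walkWeight_walkAppend _ hjoin, walkWeight_walkAppend _ hjoin, walkWeight_reverse,
    walkWeight_reverse, mul_comm (walkWeight (swap q) p n)] at h

theorem pos_symm (hK : KolmogorovCriterion q) (hq : ∀ x y, 0 ≤ q x y) {a b : S}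
    (hpath : ReflTransGen (fun x y => 0 < q x y) b a) (hab : 0 < q a b) : 0 < q b a := by
  obtain ⟨n, p, hp0, hpn, hp⟩ := exists_walk_of_reflTransGen hpath
  have hclosed : walkCons a p (n + 1) = walkCons a p 0 := hpn
  have h := hK.walkWeight_eq_of_closed hclosed
  rw [walkWeight_walkCons, walkWeight_walkCons, hp0] at h
  have hpos : 0 < swap q a b * walkWeight (swap q) p n :=
    h ▸ mul_pos hab (walkWeight_pos q hp)
  exact (hq b a).lt_of_ne fun hba => by simp [swap, ← hba] at hpos

theorem exists_reversible [Nonempty S] (hK : KolmogorovCriterion q) (hq : ∀ x y, 0 ≤ q x y)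
    (hirr : ∀ x y, ReflTransGen (fun a b => 0 < q a b) x y) :
    ∃ μ : S → ℝ, (∀ x, 0 < μ x) ∧ ∀ x y, μ x * q x y = μ y * q y x := by
  obtain ⟨x₀⟩ := ‹Nonempty S›
  choose N P hP0 hPN hP using fun z => exists_walk_of_reflTransGen (hirr z x₀)
  have hF z : 0 < walkWeight q (P z) (N z) := walkWeight_pos q (hP z)
  have hB z : 0 < walkWeight (swap q) (P z) (N z) :=
    walkWeight_pos _ fun i hi => hK.pos_symm hq (hirr _ _) (hP z i hi)
  refine ⟨fun z => walkWeight (swap q) (P z) (N z) / walkWeight q (P z) (N z),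
    fun z => div_pos (hB z) (hF z), fun a b => ?_⟩
  -- compare the chosen walk from `a` with the step `a → b` followed by the chosen walk from `b`
  have h := hK.walkWeight_mul_comm (p := P a) (r := walkCons a (P b)) (m := N b + 1)
    (hP0 a) ((hPN a).trans (hPN b).symm)
  rw [walkWeight_walkCons, walkWeight_walkCons, hP0] at h
  rw [div_mul_eq_mul_div, div_mul_eq_mul_div, div_eq_div_iff (hF a).ne' (hF b).ne']
  linear_combination -h

end KolmogorovCriterion

section Stationary

variable {S : Type*} [Fintype S] {q : S → S → ℝ} {μ π : S → ℝ}

theorem sum_sub_div_mul_eq_zero (hμ : ∀ x, 0 < μ x) (hrev : ∀ x y, μ x * q x y = μ y * q y x)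
    (hstat : ∀ y, ∑ x, π x * q x y = π y * ∑ x, q y x) (b : S) :
    ∑ z, (π b / μ b - π z / μ z) * (μ z * q z b) = 0 := by
  have hterm z : (π b / μ b - π z / μ z) * (μ z * q z b) = π b * q b z - π z * q z b := by
    field_simp [(hμ b).ne', (hμ z).ne']
    linear_combination π b * hrev z b
  rw [sum_congr rfl fun z _ => hterm z, sum_sub_distrib, ← mul_sum, hstat, sub_self]

theorem exists_eq_mul_of_stationary_of_reversible [Nonempty S] (hq : ∀ x y, 0 ≤ q x y)
    (hμ : ∀ x, 0 < μ x) (hrev : ∀ x y, μ x * q x y = μ y * q y x)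
    (hirr : ∀ x y, ReflTransGen (fun a b => 0 < q a b) x y)
    (hstat : ∀ y, ∑ x, π x * q x y = π y * ∑ x, q y x) :
    ∃ c, ∀ x, π x = c * μ x := by
  set h : S → ℝ := fun z => π z / μ z
  obtain ⟨y₀, hmax⟩ := Finite.exists_max h
  have hstep a b (hab : 0 < q a b) (hb : h b = h y₀) : h a = h y₀ := by
    have hnonneg z (_ : z ∈ univ) : 0 ≤ (h b - h z) * (μ z * q z b) :=
      mul_nonneg (by linarith [hmax z]) (mul_nonneg (hμ z).le (hq z b))
    have hzero := (sum_eq_zero_iff_of_nonneg hnonneg).mp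
      (sum_sub_div_mul_eq_zero hμ hrev hstat b) a (mem_univ a)
    have := (mul_eq_zero.mp hzero).resolve_right (mul_pos (hμ a) hab).ne'
    linarith
  have hconst z : h z = h y₀ :=
    (hirr z y₀).head_induction_on rfl fun hab _ ih => hstep _ _ hab ih
  exact ⟨h y₀, fun z => by rw [← hconst z, div_mul_cancel₀ _ (hμ z).ne']⟩

end Stationary

theorem kolmogorov_criterion_detailed_balance_general {S : Type*} [Fintype S]
    (q : S → S → ℝ) (hq : ∀ x y, 0 ≤ q x y)
    (hirr : ∀ x y : S, x ≠ y → ∃ (n : ℕ) (p : Fin (n + 1) → S),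
      p 0 = x ∧ p (Fin.last n) = y ∧ ∀ i : Fin n, 0 < q (p i.castSucc) (p i.succ))
    (hkol : ∀ (n : ℕ) (x : Fin (n + 1) → S),
      (∏ i, q (x i) (x (i + 1))) = ∏ i, q (x (i + 1)) (x i))
    (π : S → ℝ)
    (hstat : ∀ y, ∑ x, π x * q x y = π y * ∑ x, q y x) :
    ∀ x y, π x * q x y = π y * q y x := by
  intro x y
  have : Nonempty S := ⟨x⟩
  have hreach a b : ReflTransGen (fun a b => 0 < q a b) a b := by
    rcases eq_or_ne a b with rfl | hab
    · exact ReflTransGen.refl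
    · obtain ⟨n, p, rfl, rfl, hp⟩ := hirr a b hab
      exact reflTransGen_of_fin_walk p hp
  obtain ⟨μ, hμ, hrev⟩ := KolmogorovCriterion.exists_reversible hkol hq hreach
  obtain ⟨c, hc⟩ := exists_eq_mul_of_stationary_of_reversible hq hμ hrev hreach hstat
  rw [hc x, hc y, mul_assoc, mul_assoc, hrev]

theorem kolmogorov_criterion_detailed_balance {S : Type*} [Fintype S]
    (q : S → S → ℝ) (hq : ∀ x y, 0 ≤ q x y) (hqd : ∀ x, q x x = 0)
    (hirr : ∀ x y : S, x ≠ y → ∃ (n : ℕ) (p : Fin (n + 1) → S),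
      p 0 = x ∧ p (Fin.last n) = y ∧ ∀ i : Fin n, 0 < q (p i.castSucc) (p i.succ))
    (hkol : ∀ (n : ℕ) (x : Fin (n + 1) → S),
      (∏ i, q (x i) (x (i + 1))) = ∏ i, q (x (i + 1)) (x i))
    (π : S → ℝ) (hπ0 : ∀ x, 0 ≤ π x) (hπ1 : ∑ x, π x = 1)
    (hstat : ∀ y, ∑ x, π x * q x y = π y * ∑ x, q y x) :
    ∀ x y, π x * q x y = π y * q y x :=
  kolmogorov_criterion_detailed_balance_general q hq hirr hkol π hstat
end

section
/- Let k ≥ 2, let b_1,…,b_k > 0, d_1,…,d_k > 0, and let D > 0 satisfy Σ_{i=1}^k b_i/(D + d_i) = 1. For x ∈ ℤ_{≥0}^k with x ≠ 0 define ũ_x = (1/|x|) · (|x|!/∏_i x_i!) · ∏_i b_i^{x_i} · ( ∏_i d_i^{-x_i} − ∏_i (D + d_i)^{-x_i} ), where |x| = Σ_i x_i, and set ũ_0 = 0. Then for every x ∈ ℤ^k with all coordinates nonnegative and x ≠ 0: Σ_{i=1}^k [ ũ_{x−e_i} |x−e_i| b_i + ũ_{x+e_i}(x_i+1) d_i ]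 = ũ_x Σ_{i=1}^k ( |x| b_i + x_i d_i ), where terms with x − e_i having a negative coordinate are omitted (ũ vanishes there). -/
open Finset

lemma prod_split' {k : ℕ} (i : Fin k) (x : Fin k → ℕ) (g : Fin k → ℕ → ℝ) :
    ∏ j, g j (x j) = g i (x i) * ∏ j ∈ univ.erase i, g j (x j) :=
  (Finset.mul_prod_erase univ (fun j => g j (x j)) (mem_univ i)).symm

lemma prod_update' {k : ℕ} (i : Fin k) (x : Fin k → ℕ) (g : Fin k → ℕ → ℝ) (a : ℕ) :
    ∏ j, g j (Function.update x i a j) = g i a * ∏ j ∈ univ.erase i, g j (x j) := by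
  rw [prod_split' i (Function.update x i a) g]
  simp only [Function.update_self]
  congr 1
  refine Finset.prod_congr rfl fun j hj => ?_
  rw [Function.update_of_ne (Finset.mem_erase.1 hj).1]

lemma sum_split' {k : ℕ} (i : Fin k) (x : Fin k → ℕ) :
    ∑ j, x j = x i + ∑ j ∈ univ.erase i, x j :=
  (Finset.add_sum_erase univ x (mem_univ i)).symm

lemma sum_update' {k : ℕ} (i : Fin k) (x : Fin k → ℕ) (a : ℕ) :
    ∑ j, Function.update x i a j = a + ∑ j ∈ univ.erase i, x j := by
  rw [sum_split' i (Function.update x i a)]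
  simp only [Function.update_self]
  congr 1
  refine Finset.sum_congr rfl fun j hj => ?_
  rw [Function.update_of_ne (Finset.mem_erase.1 hj).1]

lemma add_single' {k : ℕ} (x : Fin k → ℕ) (i : Fin k) :
    x + Pi.single i 1 = Function.update x i (x i + 1) := by
  funext j
  rcases eq_or_ne j i with rfl | h
  · simp
  · simp [Pi.single_apply, h, Function.update_of_ne h]

lemma sub_single' {k : ℕ} (x : Fin k → ℕ) (i : Fin k) :
    x - Pi.single i 1 = Function.update x i (x i - 1) := by
  funext j
  rcases eq_or_ne j i with rfl | h
  · simp
  · simp [Pi.single_apply, h, Function.update_of_ne h]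

set_option maxHeartbeats 2000000 in
theorem multitype_linear_balance (k : ℕ) (hk : 2 ≤ k)
    (b d : Fin k → ℝ) (hb : ∀ i, 0 < b i) (hd : ∀ i, 0 < d i)
    (D : ℝ) (hD : 0 < D) (hDeq : ∑ i, b i / (D + d i) = 1)
    (u : (Fin k → ℕ) → ℝ) (hu0 : u 0 = 0)
    (hu : ∀ x : Fin k → ℕ, x ≠ 0 →
      u x = (1 / (∑ i, (x i : ℝ))) * (((Nat.factorial (∑ i, x i)) : ℝ) / ∏ i, ((Nat.factorial (x i)) : ℝ))
        * (∏ i, b i ^ x i)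
        * ((∏ i, ((d i)⁻¹) ^ x i) - ∏ i, ((D + d i)⁻¹) ^ x i)) :
    ∀ x : Fin k → ℕ, x ≠ 0 →
      (∑ i, ((if x i = 0 then 0 else
          u (x - (Pi.single i 1 : Fin k → ℕ)) * (((∑ j, (x - (Pi.single i 1 : Fin k → ℕ)) j : ℕ) : ℝ)) * b i)
        + u (x + (Pi.single i 1 : Fin k → ℕ)) * ((x i : ℝ) + 1) * d i))
      = u x * ∑ i, ((∑ j, (x j : ℝ)) * b i + (x i : ℝ) * d i) := by
  intro x hx
  have hu' : ∀ y : Fin k → ℕ, u y = (1 / (∑ i, (y i : ℝ)))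
      * (((Nat.factorial (∑ i, y i)) : ℝ) / ∏ i, ((Nat.factorial (y i)) : ℝ))
      * (∏ i, b i ^ y i)
      * ((∏ i, ((d i)⁻¹) ^ y i) - ∏ i, ((D + d i)⁻¹) ^ y i) := by
    intro y
    rcases eq_or_ne y 0 with rfl | hy
    · simp [hu0]
    · exact hu y hy
  have hn : 0 < ∑ j, x j := by
    rcases Nat.eq_zero_or_pos (∑ j, x j) with h | h
    · exact absurd (funext fun i => by
        simpa using (Finset.sum_eq_zero_iff.mp h) i (mem_univ i)) hx
    · exact h
  have hdi : ∀ i, d i ≠ 0 := fun i => (hd i).ne'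
  have hDdi : ∀ i, D + d i ≠ 0 := fun i => (add_pos hD (hd i)).ne'
  have hEfact : ∀ i : Fin k, (∏ j ∈ univ.erase i, ((Nat.factorial (x j)) : ℝ)) ≠ 0 :=
    fun i => Finset.prod_ne_zero_iff.mpr fun j _ => Nat.cast_ne_zero.mpr (Nat.factorial_ne_zero _)
  -- key lemma for the up-jump terms
  have key2 : ∀ i : Fin k, u (x + (Pi.single i 1 : Fin k → ℕ)) * ((x i : ℝ) + 1) * d i
      = ((Nat.factorial (∑ j, x j) : ℝ) / ∏ j, ((Nat.factorial (x j)) : ℝ)) * (∏ j, b j ^ x j) * b i *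
        ((∏ j, ((d j)⁻¹) ^ x j) - (∏ j, ((D + d j)⁻¹) ^ x j) * (d i / (D + d i))) := by
    intro i
    rw [hu' (x + Pi.single i 1), add_single' x i]
    rw [show (∑ j, ((Function.update x i (x i + 1) j : ℕ) : ℝ))
        = ((∑ j, Function.update x i (x i + 1) j : ℕ) : ℝ) from (Nat.cast_sum _ _).symm]
    rw [sum_update' i x (x i + 1)]
    rw [prod_update' i x (fun _ m => ((Nat.factorial m : ℝ))) (x i + 1)]
    rw [prod_update' i x (fun j m => b j ^ m) (x i + 1)]
    rw [prod_update' i x (fun j m => (d j)⁻¹ ^ m) (x i + 1)]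
    rw [prod_update' i x (fun j m => (D + d j)⁻¹ ^ m) (x i + 1)]
    rw [sum_split' i x]
    rw [prod_split' i x (fun _ m => ((Nat.factorial m : ℝ)))]
    rw [prod_split' i x (fun j m => b j ^ m)]
    rw [prod_split' i x (fun j m => (d j)⁻¹ ^ m)]
    rw [prod_split' i x (fun j m => (D + d j)⁻¹ ^ m)]
    have hE1 := hEfact i
    set s := ∑ j ∈ univ.erase i, x j with hs
    set E1 := ∏ j ∈ univ.erase i, ((Nat.factorial (x j)) : ℝ) with hE1d
    set E2 := ∏ j ∈ univ.erase i, b j ^ x j with hE2d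
    set E3 := ∏ j ∈ univ.erase i, (d j)⁻¹ ^ x j with hE3d
    set E4 := ∏ j ∈ univ.erase i, (D + d j)⁻¹ ^ x j with hE4d
    have h1 : x i + 1 + s = (x i + s) + 1 := by omega
    rw [h1, Nat.factorial_succ (x i + s), Nat.factorial_succ (x i)]
    have hc1 : ((x i + s : ℕ) : ℝ) + 1 ≠ 0 := by positivity
    have hfx : ((Nat.factorial (x i)) : ℝ) ≠ 0 := Nat.cast_ne_zero.mpr (Nat.factorial_ne_zero _)
    push_cast
    rw [pow_succ, pow_succ, pow_succ]
    have hd2 : d i ≠ 0 := hdi i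
    have hd3 : D + d i ≠ 0 := hDdi i
    generalize (d i)⁻¹ ^ x i = p
    generalize (D + d i)⁻¹ ^ x i = q
    field_simp
  -- key lemma for the down-jump terms
  have key1 : ∀ i : Fin k,
      (if x i = 0 then 0 else
        u (x - (Pi.single i 1 : Fin k → ℕ)) * (((∑ j, (x - (Pi.single i 1 : Fin k → ℕ)) j : ℕ) : ℝ)) * b i)
      = ((Nat.factorial (∑ j, x j) : ℝ) / ∏ j, ((Nat.factorial (x j)) : ℝ)) * (∏ j, b j ^ x j)
        * ((x i : ℝ) / ((∑ j, x j : ℕ) : ℝ))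
        * ((∏ j, ((d j)⁻¹) ^ x j) * d i - (∏ j, ((D + d j)⁻¹) ^ x j) * (D + d i)) := by
    intro i
    by_cases h0 : x i = 0
    · simp [h0]
    · rw [if_neg h0]
      obtain ⟨c, hc⟩ : ∃ c, x i = c + 1 := ⟨x i - 1, by omega⟩
      rw [hu' (x - Pi.single i 1), sub_single' x i, show x i - 1 = c from by omega]
      rw [show (∑ j, ((Function.update x i c j : ℕ) : ℝ))
          = ((∑ j, Function.update x i c j : ℕ) : ℝ) from (Nat.cast_sum _ _).symm]
      rw [sum_update' i x c]
      rw [prod_update' i x (fun _ m => ((Nat.factorial m : ℝ))) c]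
      rw [prod_update' i x (fun j m => b j ^ m) c]
      rw [prod_update' i x (fun j m => (d j)⁻¹ ^ m) c]
      rw [prod_update' i x (fun j m => (D + d j)⁻¹ ^ m) c]
      rw [sum_split' i x]
      rw [prod_split' i x (fun _ m => ((Nat.factorial m : ℝ)))]
      rw [prod_split' i x (fun j m => b j ^ m)]
      rw [prod_split' i x (fun j m => (d j)⁻¹ ^ m)]
      rw [prod_split' i x (fun j m => (D + d j)⁻¹ ^ m)]
      rw [hc]
      have hE1 := hEfact i
      set s := ∑ j ∈ univ.erase i, x j with hs
      set E1 := ∏ j ∈ univ.erase i, ((Nat.factorial (x j)) : ℝ) with hE1d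
      set E2 := ∏ j ∈ univ.erase i, b j ^ x j with hE2d
      set E3 := ∏ j ∈ univ.erase i, (d j)⁻¹ ^ x j with hE3d
      set E4 := ∏ j ∈ univ.erase i, (D + d j)⁻¹ ^ x j with hE4d
      rcases Nat.eq_zero_or_pos (c + s) with hm | hm
      · -- the previous state is x = e i; both sides vanish
        have hc0 : c = 0 := by omega
        have hs0 : s = 0 := by omega
        have hs0' : ∑ j ∈ univ.erase i, x j = 0 := by rw [← hs]; exact hs0
        have hE3one : E3 = 1 := Finset.prod_eq_one fun j hj => by
          rw [Finset.sum_eq_zero_iff.mp hs0' j hj, pow_zero]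
        have hE4one : E4 = 1 := Finset.prod_eq_one fun j hj => by
          rw [Finset.sum_eq_zero_iff.mp hs0' j hj, pow_zero]
        rw [hE3one, hE4one, hc0, hs0]
        simp [inv_mul_cancel₀ (hdi i), inv_mul_cancel₀ (hDdi i)]
      · have h1 : c + 1 + s = (c + s) + 1 := by omega
        rw [h1, Nat.factorial_succ (c + s), Nat.factorial_succ c]
        have hm0 : ((c + s : ℕ) : ℝ) ≠ 0 := Nat.cast_ne_zero.mpr hm.ne'
        have hfc : ((Nat.factorial c) : ℝ) ≠ 0 := Nat.cast_ne_zero.mpr (Nat.factorial_ne_zero _)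
        push_cast
        rw [pow_succ, pow_succ, pow_succ]
        have hd2 : d i ≠ 0 := hdi i
        have hd3 : D + d i ≠ 0 := hDdi i
        have hm0' : (c : ℝ) + (s : ℝ) ≠ 0 := by exact_mod_cast hm0
        have hc10 : (c : ℝ) + 1 ≠ 0 := by positivity
        generalize (d i)⁻¹ ^ c = p
        generalize (D + d i)⁻¹ ^ c = q
        field_simp
  -- assemble
  have hNcast : (∑ j, ((x j : ℕ) : ℝ)) = ((∑ j, x j : ℕ) : ℝ) := (Nat.cast_sum _ _).symm
  have hN0 : ((∑ j, x j : ℕ) : ℝ) ≠ 0 := Nat.cast_ne_zero.mpr hn.ne'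
  rw [hu x hx, hNcast]
  rw [Finset.sum_congr rfl (fun i (_ : i ∈ (univ : Finset (Fin k))) => by rw [key1 i, key2 i])]
  have expand : (∑ i, (((Nat.factorial (∑ j, x j) : ℝ) / ∏ j, ((Nat.factorial (x j)) : ℝ)) * (∏ j, b j ^ x j)
        * ((x i : ℝ) / ((∑ j, x j : ℕ) : ℝ))
        * ((∏ j, ((d j)⁻¹) ^ x j) * d i - (∏ j, ((D + d j)⁻¹) ^ x j) * (D + d i))
      + ((Nat.factorial (∑ j, x j) : ℝ) / ∏ j, ((Nat.factorial (x j)) : ℝ)) * (∏ j, b j ^ x j) * b i *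
        ((∏ j, ((d j)⁻¹) ^ x j) - (∏ j, ((D + d j)⁻¹) ^ x j) * (d i / (D + d i)))))
      = (((Nat.factorial (∑ j, x j) : ℝ) / ∏ j, ((Nat.factorial (x j)) : ℝ)) * (∏ j, b j ^ x j)
          * (∏ j, ((d j)⁻¹) ^ x j) / ((∑ j, x j : ℕ) : ℝ)) * (∑ i, (x i : ℝ) * d i)
        - (((Nat.factorial (∑ j, x j) : ℝ) / ∏ j, ((Nat.factorial (x j)) : ℝ)) * (∏ j, b j ^ x j)
          * (∏ j, ((D + d j)⁻¹) ^ x j) / ((∑ j, x j : ℕ) : ℝ)) * (∑ i, (x i : ℝ) * (D + d i))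
        + (((Nat.factorial (∑ j, x j) : ℝ) / ∏ j, ((Nat.factorial (x j)) : ℝ)) * (∏ j, b j ^ x j)
          * (∏ j, ((d j)⁻¹) ^ x j)) * (∑ i, b i)
        - (((Nat.factorial (∑ j, x j) : ℝ) / ∏ j, ((Nat.factorial (x j)) : ℝ)) * (∏ j, b j ^ x j)
          * (∏ j, ((D + d j)⁻¹) ^ x j)) * (∑ i, b i * (d i / (D + d i))) := by
    rw [Finset.mul_sum, Finset.mul_sum, Finset.mul_sum, Finset.mul_sum,
      ← Finset.sum_sub_distrib, ← Finset.sum_add_distrib, ← Finset.sum_sub_distrib]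
    exact Finset.sum_congr rfl fun i _ => by ring
  rw [expand]
  have hsum1 : (∑ i, (x i : ℝ) * (D + d i)) = D * ((∑ j, x j : ℕ) : ℝ) + ∑ i, (x i : ℝ) * d i := by
    simp only [mul_add]
    rw [Finset.sum_add_distrib, ← Finset.sum_mul, hNcast]
    ring
  have hsum2 : (∑ i, b i * (d i / (D + d i))) = (∑ i, b i) - D := by
    rw [Finset.sum_congr rfl fun i (_ : i ∈ (univ : Finset (Fin k))) =>
      show b i * (d i / (D + d i)) = b i - D * (b i / (D + d i)) from by
        have h := hDdi i
        field_simp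
        ring]
    rw [Finset.sum_sub_distrib, ← Finset.mul_sum, hDeq, mul_one]
  rw [hsum1, hsum2]
  rw [Finset.sum_congr rfl (fun i (_ : i ∈ (univ : Finset (Fin k))) =>
    show ((∑ j, x j : ℕ) : ℝ) * b i + (x i : ℝ) * d i = ((∑ j, x j : ℕ) : ℝ) * b i + (x i : ℝ) * d i from rfl)]
  rw [Finset.sum_add_distrib, ← Finset.mul_sum]
  have hN0' : (∑ j, ((x j : ℕ) : ℝ)) ≠ 0 := by rw [hNcast]; exact hN0
  have hPf : (∏ j, ((Nat.factorial (x j)) : ℝ)) ≠ 0 :=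
    Finset.prod_ne_zero_iff.mpr fun j _ => Nat.cast_ne_zero.mpr (Nat.factorial_ne_zero _)
  generalize (∏ j, ((d j)⁻¹) ^ x j) = P
  generalize (∏ j, ((D + d j)⁻¹) ^ x j) = Q
  field_simp
  ring
end
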